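/- arXiv:math-ph/9907006 — 7 statements merged into one kernel-verified Lean document; each statement's English description precedes it below -/
import Mathlib

section
/- For every real V with 0 < V < 1 there exists a constant C > 0 such that for all n ∈ ℕ the matrix power M_V^n has operator norm at most C, where M_V = !![4V² − 1, −2V; 2V, −1]. Consequently, every finite product of 2×2 matrices each of which equals M_V or −1 (minus the identity) has operator norm at most C. -/
open scoped Matrix.Norms.L2Operator

/-- The two-step transfer matrix of the random dimer model at the critical
energy `E = V` across a dimer site with potential value `-V`. -/
noncomputable def dimerM (V : ℝ) : Matrix (Fin 2) (Fin 2) ℝ :=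
  !![4 * V ^ 2 - 1, -2 * V; 2 * V, -1]

lemma dimerM_sq (V : ℝ) :
    dimerM V * dimerM V = (4 * V ^ 2 - 2) • dimerM V - 1 := by
  ext i j
  fin_cases i <;> fin_cases j <;>
    simp [dimerM, Matrix.mul_apply, Fin.sum_univ_two, Matrix.one_apply] <;> ring

/-- For `0 < V < 1`, the powers of `M_V` are uniformly bounded in operator norm,
and consequently so is any finite product of matrices each equal to `M_V` or `-1`. -/
theorem dimer_powers_uniformly_bounded (V : ℝ) (hV0 : 0 < V) (hV1 : V < 1) :
    ∃ C : ℝ, 0 < C ∧ (∀ n : ℕ, ‖dimerM V ^ n‖ ≤ C) ∧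
      ∀ L : List (Matrix (Fin 2) (Fin 2) ℝ),
        (∀ A ∈ L, A = dimerM V ∨ A = -1) → ‖L.prod‖ ≤ C := by
  set M := dimerM V with hM
  set c : ℝ := 2 * V ^ 2 - 1 with hc
  have hV2 : 0 < V ^ 2 := by positivity
  have hV2' : V ^ 2 < 1 := by nlinarith
  have hc1 : c < 1 := by rw [hc]; nlinarith
  have hc2 : -1 < c := by rw [hc]; nlinarith
  set θ : ℝ := Real.arccos c with hθ
  have hcos : Real.cos θ = c := Real.cos_arccos hc2.le hc1.le
  have hsin : 0 < Real.sin θ := by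
    rw [hθ, Real.sin_arccos]
    have : 0 < 1 - c ^ 2 := by nlinarith
    positivity
  set a : ℕ → ℝ := fun n => Real.sin (n * θ) / Real.sin θ with ha
  have habound : ∀ n, |a n| ≤ 1 / Real.sin θ := by
    intro n
    rw [ha]
    simp only []
    rw [abs_div, abs_of_pos hsin]
    gcongr
    exact abs_le.mpr ⟨Real.neg_one_le_sin _, Real.sin_le_one _⟩
  have hrec : ∀ n : ℕ, a (n + 2) = (4 * V ^ 2 - 2) * a (n + 1) - a n := by
    intro n
    have h1 : Real.sin (((n : ℝ) + 1) * θ + θ)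
        = Real.sin (((n : ℝ) + 1) * θ) * Real.cos θ
          + Real.cos (((n : ℝ) + 1) * θ) * Real.sin θ := Real.sin_add _ _
    have h2 : Real.sin (((n : ℝ) + 1) * θ - θ)
        = Real.sin (((n : ℝ) + 1) * θ) * Real.cos θ
          - Real.cos (((n : ℝ) + 1) * θ) * Real.sin θ := Real.sin_sub _ _
    have e1 : ((n : ℝ) + 1) * θ + θ = ((n : ℕ) + 2 : ℕ) * θ := by push_cast; ring
    have e2 : ((n : ℝ) + 1) * θ - θ = (n : ℝ) * θ := by ring
    have e3 : ((n : ℝ) + 1) * θ = ((n : ℕ) + 1 : ℕ) * θ := by push_cast; ring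
    rw [e1] at h1
    rw [e2] at h2
    rw [ha]
    simp only []
    rw [e3] at h1 h2
    have h4c : (4 : ℝ) * V ^ 2 - 2 = 2 * Real.cos θ := by rw [hcos, hc]; ring
    rw [h4c]
    field_simp
    push_cast at h1 h2 ⊢
    simp only [mul_comm θ] at ⊢
    linear_combination h1 + h2
  have key : ∀ n : ℕ, M ^ (n + 1) = a (n + 1) • M - a n • 1 := by
    intro n
    induction n with
    | zero =>
        have ha1 : a 1 = 1 := by
          rw [ha]; simp only []; push_cast; rw [one_mul, div_self hsin.ne']
        have ha0 : a 0 = 0 := by rw [ha]; simp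
        rw [ha1, ha0]
        simp
    | succ m ih =>
        have : M ^ (m + 2) = M ^ (m + 1) * M := pow_succ M (m + 1)
        rw [this, ih, sub_mul, smul_mul_assoc, smul_mul_assoc, one_mul, dimerM_sq,
          hrec m]
        rw [smul_sub, smul_smul]
        module
  set C : ℝ := (‖M‖ + ‖(1 : Matrix (Fin 2) (Fin 2) ℝ)‖) / Real.sin θ
      + ‖(1 : Matrix (Fin 2) (Fin 2) ℝ)‖ with hC
  have hone : 0 < ‖(1 : Matrix (Fin 2) (Fin 2) ℝ)‖ := by
    rw [norm_pos_iff]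
    exact one_ne_zero
  have hfrac : 0 ≤ (‖M‖ + ‖(1 : Matrix (Fin 2) (Fin 2) ℝ)‖) / Real.sin θ := by
    apply div_nonneg _ hsin.le
    positivity
  have hCpos : 0 < C := by rw [hC]; linarith
  have hpow : ∀ n : ℕ, ‖M ^ n‖ ≤ C := by
    intro n
    match n with
    | 0 => rw [pow_zero, hC]; linarith
    | (m + 1) =>
        rw [key m]
        calc ‖a (m + 1) • M - a m • 1‖ ≤ ‖a (m + 1) • M‖ + ‖a m • (1 : Matrix (Fin 2) (Fin 2) ℝ)‖ :=
              norm_sub_le _ _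
          _ = |a (m + 1)| * ‖M‖ + |a m| * ‖(1 : Matrix (Fin 2) (Fin 2) ℝ)‖ := by
              rw [norm_smul, norm_smul, Real.norm_eq_abs, Real.norm_eq_abs]
          _ ≤ (1 / Real.sin θ) * ‖M‖ + (1 / Real.sin θ) * ‖(1 : Matrix (Fin 2) (Fin 2) ℝ)‖ := by
              gcongr <;> [exact habound (m+1); exact habound m]
          _ = (‖M‖ + ‖(1 : Matrix (Fin 2) (Fin 2) ℝ)‖) / Real.sin θ := by ring
          _ ≤ C := by rw [hC]; linarith
  refine ⟨C, hCpos, hpow, ?_⟩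
  intro L hL
  have hform : ∃ k : ℕ, L.prod = M ^ k ∨ L.prod = -(M ^ k) := by
    induction L with
    | nil => exact ⟨0, Or.inl (by simp)⟩
    | cons A L' ih =>
        obtain ⟨k, hk⟩ := ih (fun B hB => hL B (List.mem_cons_of_mem _ hB))
        rcases hL A List.mem_cons_self with hA | hA
        · rcases hk with hk | hk
          · exact ⟨k + 1, Or.inl (by rw [List.prod_cons, hA, hk, ← pow_succ'])⟩
          · exact ⟨k + 1, Or.inr (by rw [List.prod_cons, hA, hk, mul_neg, ← pow_succ'])⟩
        · rcases hk with hk | hk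
          · exact ⟨k, Or.inr (by rw [List.prod_cons, hA, hk]; simp)⟩
          · exact ⟨k, Or.inl (by rw [List.prod_cons, hA, hk]; simp)⟩
  obtain ⟨k, hk | hk⟩ := hform
  · rw [hk]; exact hpow k
  · rw [hk, norm_neg]; exact hpow k
end

section
/- For every real V with 0 < V ≤ 1 there exists a constant C > 0 such that for all n ∈ ℕ the operator norm of M_V^n is at most C·(n + 1), where M_V = !![4V² − 1, −2V; 2V, −1]; consequently lim_{n→∞} (1/n)·log‖M_V^n‖ = 0. -/
open scoped Matrix.Norms.L2Operator

/-- Chebyshev-type recurrence coefficients. -/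
def dimerCheb (t : ℝ) : ℕ → ℝ
  | 0 => 0
  | 1 => 1
  | n + 2 => t * dimerCheb t (n + 1) - dimerCheb t n

lemma dimerCheb_add_two (t : ℝ) (n : ℕ) :
    dimerCheb t (n + 2) = t * dimerCheb t (n + 1) - dimerCheb t n := rfl

/-- Invariant of the recurrence when `t = 2c`. -/
lemma dimerCheb_invariant (c : ℝ) : ∀ n : ℕ,
    (1 - c ^ 2) * (dimerCheb (2 * c) n) ^ 2 +
      (dimerCheb (2 * c) (n + 1) - c * dimerCheb (2 * c) n) ^ 2 = 1 := by
  intro n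
  induction n with
  | zero => simp [dimerCheb]
  | succ n ih =>
    rw [dimerCheb_add_two]
    linear_combination ih

lemma dimerCheb_abs_le (c : ℝ) (hc : |c| ≤ 1) : ∀ n : ℕ, |dimerCheb (2 * c) n| ≤ n := by
  have hc2 : c ^ 2 ≤ 1 := by
    have := abs_nonneg c
    nlinarith [sq_abs c]
  intro n
  induction n with
  | zero => simp [dimerCheb]
  | succ n ih =>
    have hinv := dimerCheb_invariant c n
    have hb2 : (dimerCheb (2 * c) (n + 1) - c * dimerCheb (2 * c) n) ^ 2 ≤ 1 := by
      nlinarith [sq_nonneg (dimerCheb (2 * c) n)]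
    have hb : |dimerCheb (2 * c) (n + 1) - c * dimerCheb (2 * c) n| ≤ 1 := by
      rw [abs_le]
      constructor <;> nlinarith [sq_nonneg (dimerCheb (2 * c) (n + 1) - c * dimerCheb (2 * c) n + 1),
        sq_nonneg (dimerCheb (2 * c) (n + 1) - c * dimerCheb (2 * c) n - 1)]
    calc |dimerCheb (2 * c) (n + 1)|
        = |c * dimerCheb (2 * c) n +
            (dimerCheb (2 * c) (n + 1) - c * dimerCheb (2 * c) n)| := by ring_nf
      _ ≤ |c * dimerCheb (2 * c) n| +
            |dimerCheb (2 * c) (n + 1) - c * dimerCheb (2 * c) n| := abs_add_le _ _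
      _ ≤ |c| * |dimerCheb (2 * c) n| + 1 := by rw [abs_mul]; linarith
      _ ≤ 1 * n + 1 := by
          have h0 := abs_nonneg (dimerCheb (2 * c) n)
          have h1 := abs_nonneg c
          nlinarith
      _ = (n + 1 : ℕ) := by push_cast; ring

/-- Matrix power formula from a Cayley–Hamilton type relation. -/
lemma dimerCheb_pow (t : ℝ) (M : Matrix (Fin 2) (Fin 2) ℝ)
    (hM : M * M = t • M - 1) : ∀ n : ℕ,
    M ^ (n + 1) = dimerCheb t (n + 1) • M - dimerCheb t n • (1 : Matrix (Fin 2) (Fin 2) ℝ) := by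
  intro n
  induction n with
  | zero => simp [dimerCheb]
  | succ n ih =>
    rw [pow_succ, ih, sub_mul, smul_mul_assoc, smul_mul_assoc, one_mul, hM,
      dimerCheb_add_two, smul_sub, smul_smul, sub_smul]
    module

lemma dimer_norm_one : ‖(1 : Matrix (Fin 2) (Fin 2) ℝ)‖ = 1 := by
  rw [Matrix.cstar_norm_def, map_one]
  exact norm_one

/-- Linear growth of matrix powers. -/
lemma dimerCheb_norm_pow_le (t : ℝ) (M : Matrix (Fin 2) (Fin 2) ℝ)
    (hM : M * M = t • M - 1) (hb : ∀ n : ℕ, |dimerCheb t n| ≤ n) (n : ℕ) :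
    ‖M ^ n‖ ≤ (‖M‖ + 1) * (n + 1) := by
  have hMnn : (0 : ℝ) ≤ ‖M‖ := norm_nonneg M
  cases n with
  | zero =>
    simp only [pow_zero, Nat.cast_zero]
    rw [dimer_norm_one]
    nlinarith
  | succ n =>
    rw [dimerCheb_pow t M hM n]
    have h1 : ‖dimerCheb t (n + 1) • M - dimerCheb t n • (1 : Matrix (Fin 2) (Fin 2) ℝ)‖
        ≤ |dimerCheb t (n + 1)| * ‖M‖ + |dimerCheb t n| * ‖(1 : Matrix (Fin 2) (Fin 2) ℝ)‖ := by
      calc _ ≤ ‖dimerCheb t (n + 1) • M‖ + ‖dimerCheb t n • (1 : Matrix (Fin 2) (Fin 2) ℝ)‖ :=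
            norm_sub_le _ _
        _ = _ := by rw [norm_smul, norm_smul, Real.norm_eq_abs, Real.norm_eq_abs]
    rw [dimer_norm_one] at h1
    have h2 := hb (n + 1)
    have h3 := hb n
    have h4 := abs_nonneg (dimerCheb t (n + 1))
    have h5 := abs_nonneg (dimerCheb t n)
    push_cast at h2 h3 ⊢
    nlinarith

/-- For `0 < V ≤ 1`, the operator norm of `M_V ^ n` grows at most linearly, and
consequently the Lyapounov exponent `lim (1/n) log ‖M_V ^ n‖` vanishes. -/
theorem dimer_lyapounov_zero (V : ℝ) (hV0 : 0 < V) (hV1 : V ≤ 1) :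
    (∃ C : ℝ, 0 < C ∧ ∀ n : ℕ, ‖dimerM V ^ n‖ ≤ C * (n + 1)) ∧
      Filter.Tendsto (fun n : ℕ => (1 / n : ℝ) * Real.log ‖dimerM V ^ n‖)
        Filter.atTop (nhds 0) := by
  classical
  set t : ℝ := 4 * V ^ 2 - 2 with ht
  set c : ℝ := 2 * V ^ 2 - 1 with hcdef
  have htc : t = 2 * c := by rw [ht, hcdef]; ring
  have hc : |c| ≤ 1 := by
    rw [abs_le]; constructor <;> nlinarith
  have hb : ∀ n : ℕ, |dimerCheb t n| ≤ n := by rw [htc]; exact dimerCheb_abs_le c hc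
  set M : Matrix (Fin 2) (Fin 2) ℝ := dimerM V with hMdef
  set N : Matrix (Fin 2) (Fin 2) ℝ := !![-1, 2 * V; -2 * V, 4 * V ^ 2 - 1] with hNdef
  have hM : M * M = t • M - 1 := by
    ext i j
    fin_cases i <;> fin_cases j <;>
      simp [hMdef, dimerM, Matrix.mul_apply, Fin.sum_univ_two, Matrix.one_apply, ht] <;> ring
  have hN : N * N = t • N - 1 := by
    ext i j
    fin_cases i <;> fin_cases j <;>
      simp [hNdef, Matrix.mul_apply, Fin.sum_univ_two, Matrix.one_apply, ht] <;> ring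
  have hMN : M * N = 1 := by
    ext i j
    fin_cases i <;> fin_cases j <;>
      simp [hMdef, hNdef, dimerM, Matrix.mul_apply, Fin.sum_univ_two, Matrix.one_apply] <;> ring
  have hNM : N * M = 1 := by
    ext i j
    fin_cases i <;> fin_cases j <;>
      simp [hMdef, hNdef, dimerM, Matrix.mul_apply, Fin.sum_univ_two, Matrix.one_apply] <;> ring
  have hMpow := dimerCheb_norm_pow_le t M hM hb
  have hNpow := dimerCheb_norm_pow_le t N hN hb
  have hMNpow : ∀ n : ℕ, M ^ n * N ^ n = 1 := by
    intro n
    induction n with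
    | zero => simp
    | succ n ih =>
      rw [pow_succ, pow_succ']
      rw [mul_assoc, ← mul_assoc M N, hMN, one_mul, ih]
  set C : ℝ := ‖M‖ + 1 with hCdef
  set D : ℝ := ‖N‖ + 1 with hDdef
  have hCpos : 0 < C := by have := norm_nonneg M; rw [hCdef]; linarith
  have hDpos : 0 < D := by have := norm_nonneg N; rw [hDdef]; linarith
  have hMn_pos : ∀ n : ℕ, 0 < ‖M ^ n‖ := by
    intro n
    have h1 : (1 : ℝ) ≤ ‖M ^ n‖ * ‖N ^ n‖ := by
      calc (1 : ℝ) = ‖(1 : Matrix (Fin 2) (Fin 2) ℝ)‖ := dimer_norm_one.symm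
        _ = ‖M ^ n * N ^ n‖ := by rw [hMNpow n]
        _ ≤ ‖M ^ n‖ * ‖N ^ n‖ := norm_mul_le _ _
    by_contra h
    push_neg at h
    have h0 : ‖M ^ n‖ = 0 := le_antisymm h (norm_nonneg _)
    rw [h0, zero_mul] at h1
    linarith
  have hMn_lb : ∀ n : ℕ, 1 / (D * (n + 1)) ≤ ‖M ^ n‖ := by
    intro n
    have hD1 : 0 < D * (n + 1) := by positivity
    have h1 : (1 : ℝ) ≤ ‖M ^ n‖ * ‖N ^ n‖ := by
      calc (1 : ℝ) = ‖(1 : Matrix (Fin 2) (Fin 2) ℝ)‖ := dimer_norm_one.symm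
        _ = ‖M ^ n * N ^ n‖ := by rw [hMNpow n]
        _ ≤ ‖M ^ n‖ * ‖N ^ n‖ := norm_mul_le _ _
    have h2 := hNpow n
    rw [div_le_iff₀ hD1]
    calc (1 : ℝ) ≤ ‖M ^ n‖ * ‖N ^ n‖ := h1
      _ ≤ ‖M ^ n‖ * (D * (n + 1)) := by
          exact mul_le_mul_of_nonneg_left h2 (norm_nonneg _)
  refine ⟨⟨C, hCpos, fun n => hMpow n⟩, ?_⟩
  -- squeeze between ±(log(2·const) + log n)/n for n ≥ 1
  have hlog : Filter.Tendsto (fun n : ℕ => Real.log n / (n : ℝ)) Filter.atTop (nhds 0) := by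
    have h := Real.isLittleO_log_id_atTop.tendsto_div_nhds_zero
    exact h.comp tendsto_natCast_atTop_atTop
  have hconst : ∀ a : ℝ, Filter.Tendsto (fun n : ℕ => a / (n : ℝ)) Filter.atTop (nhds 0) :=
    fun a => tendsto_const_div_atTop_nhds_zero_nat a
  have hupper : Filter.Tendsto (fun n : ℕ => (Real.log (2 * C) + Real.log n) / (n : ℝ))
      Filter.atTop (nhds 0) := by
    have := (hconst (Real.log (2 * C))).add hlog
    simpa [add_div] using this
  have hlower : Filter.Tendsto (fun n : ℕ => -((Real.log (2 * D) + Real.log n) / (n : ℝ)))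
      Filter.atTop (nhds 0) := by
    have h2 := ((hconst (Real.log (2 * D))).add hlog).neg
    simp only [add_zero, neg_zero] at h2
    apply h2.congr
    intro n
    rw [add_div]
  apply tendsto_of_tendsto_of_tendsto_of_le_of_le' hlower hupper
  · -- lower bound eventually
    filter_upwards [Filter.eventually_ge_atTop 1] with n hn
    have hn0 : (0 : ℝ) < n := by exact_mod_cast hn
    have hlb : 1 / (2 * D * n) ≤ ‖M ^ n‖ := by
      have h1 := hMn_lb n
      have hn1 : (1 : ℝ) ≤ n := by exact_mod_cast hn
      have h2 : 1 / (2 * D * n) ≤ 1 / (D * (n + 1)) := by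
        apply one_div_le_one_div_of_le
        · positivity
        · nlinarith [hDpos]
      linarith
    have hlog_lb : -(Real.log (2 * D) + Real.log n) ≤ Real.log ‖M ^ n‖ := by
      have h3 : Real.log (1 / (2 * D * n)) ≤ Real.log ‖M ^ n‖ :=
        Real.log_le_log (by positivity) hlb
      rw [one_div, Real.log_inv, Real.log_mul (by positivity) (by positivity)] at h3
      linarith
    have heq : (1 / (n : ℝ)) * Real.log ‖M ^ n‖ = Real.log ‖M ^ n‖ / n := by ring
    rw [heq, ← neg_div]
    exact (div_le_div_iff_of_pos_right hn0).mpr hlog_lb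
  · filter_upwards [Filter.eventually_ge_atTop 1] with n hn
    have hn0 : (0 : ℝ) < n := by exact_mod_cast hn
    have hub : ‖M ^ n‖ ≤ 2 * C * n := by
      have h1 := hMpow n
      have hn1 : (1 : ℝ) ≤ n := by exact_mod_cast hn
      nlinarith [hCpos]
    have hlog_ub : Real.log ‖M ^ n‖ ≤ Real.log (2 * C) + Real.log n := by
      have h3 : Real.log ‖M ^ n‖ ≤ Real.log (2 * C * n) :=
        Real.log_le_log (hMn_pos n) hub
      rwa [Real.log_mul (by positivity) (by positivity)] at h3
    have heq : (1 / (n : ℝ)) * Real.log ‖M ^ n‖ = Real.log ‖M ^ n‖ / n := by ring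
    rw [heq]
    exact (div_le_div_iff_of_pos_right hn0).mpr hlog_ub
end

section
/- For every real V with V > 1, the matrix M_V = !![4V² − 1, −2V; 2V, −1] has the real eigenvalue λ = 2V² − 1 + 2V·√(V² − 1), and λ > 1; in particular the spectral radius of M_V is strictly greater than 1. -/
/-- For `V > 1`, the matrix `M_V` has the real eigenvalue
`λ = 2V² - 1 + 2V√(V² - 1) > 1`; in particular its spectral radius is
strictly greater than `1`. -/
theorem dimer_eigenvalue_gt_one (V : ℝ) (hV : 1 < V) :
    (∃ v : Fin 2 → ℝ, v ≠ 0 ∧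
        (dimerM V).mulVec v = (2 * V ^ 2 - 1 + 2 * V * Real.sqrt (V ^ 2 - 1)) • v) ∧
      1 < 2 * V ^ 2 - 1 + 2 * V * Real.sqrt (V ^ 2 - 1) ∧
      1 < spectralRadius ℝ (dimerM V) := by
  set s := Real.sqrt (V ^ 2 - 1) with hs
  have hV0 : (0:ℝ) < V := lt_trans one_pos hV
  have hs2 : s ^ 2 = V ^ 2 - 1 := by
    rw [hs, Real.sq_sqrt]; nlinarith
  have hs0 : 0 ≤ s := Real.sqrt_nonneg _
  set lam := 2 * V ^ 2 - 1 + 2 * V * s with hlam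
  have hlamgt : 1 < lam := by
    have : 0 ≤ 2 * V * s := by positivity
    nlinarith
  -- characteristic equation
  have hchar : lam ^ 2 - (4 * V ^ 2 - 2) * lam + 1 = 0 := by
    rw [hlam]; nlinarith [hs2]
  refine ⟨⟨![1 + lam, 2 * V], ?_, ?_⟩, hlamgt, ?_⟩
  · intro h
    have h1 : (1 + lam) = 0 := congrFun h 0
    linarith
  · funext i
    fin_cases i <;>
      simp [dimerM, Matrix.mulVec, dotProduct, Fin.sum_univ_two] <;> nlinarith [hchar]
  · -- spectral radius
    have hmem : lam ∈ spectrum ℝ (dimerM V) := by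
      rw [spectrum.mem_iff]
      intro hunit
      rw [Matrix.isUnit_iff_isUnit_det] at hunit
      have hdet : ((algebraMap ℝ (Matrix (Fin 2) (Fin 2) ℝ)) lam - dimerM V).det = 0 := by
        have : (algebraMap ℝ (Matrix (Fin 2) (Fin 2) ℝ)) lam - dimerM V =
            !![lam - (4 * V ^ 2 - 1), 2 * V; -(2 * V), lam + 1] := by
          ext i j
          fin_cases i <;> fin_cases j <;>
            simp [dimerM, Matrix.algebraMap_matrix_apply, Matrix.one_apply]
        rw [this, Matrix.det_fin_two_of]
        nlinarith [hchar]
      rw [hdet] at hunit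
      exact hunit.ne_zero rfl
    have hle : (‖lam‖₊ : ENNReal) ≤ spectralRadius ℝ (dimerM V) :=
      le_iSup₂ (f := fun k (_ : k ∈ spectrum ℝ (dimerM V)) => (‖k‖₊ : ENNReal)) lam hmem
    refine lt_of_lt_of_le ?_ hle
    have h1 : (1 : ENNReal) < ‖lam‖₊ := by
      rw [← ENNReal.coe_one, ENNReal.coe_lt_coe, ← NNReal.coe_lt_coe]
      simpa [Real.norm_eq_abs, abs_of_pos (lt_trans one_pos hlamgt)] using hlamgt
    exact h1
end

section
/- Let A, B ∈ SL(2,ℝ) with |tr A| < 2 and |tr B| < 2 (both elliptic), and suppose A·B ≠ B·A. Then the commutator A·B·A⁻¹·B⁻¹ is hyperbolic, i.e. |tr(A·B·A⁻¹·B⁻¹)| > 2. -/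
lemma core_pos (a b c d e f g h : ℝ)
    (h1 : a*d - b*c = 1) (h2 : e*h - f*g = 1)
    (hA : (a+d)^2 < 4) (hB : (e+h)^2 < 4)
    (hne : ¬(b*g - c*f = 0 ∧ f*(a-d) - b*(e-h) = 0 ∧ c*(e-h) - g*(a-d) = 0)) :
    0 < (b*g - c*f)^2 + (f*(a-d) - b*(e-h)) * (c*(e-h) - g*(a-d)) := by
  have hbc : 4*(b*c) + (a-d)^2 < 0 := by nlinarith
  have hfg : 4*(f*g) + (e-h)^2 < 0 := by nlinarith
  have hbc0 : b*c < 0 := by nlinarith [sq_nonneg (a-d)]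
  have hfg0 : f*g < 0 := by nlinarith [sq_nonneg (e-h)]
  have hb : b ≠ 0 := by intro hb0; rw [hb0] at hbc0; simp at hbc0
  have hf : f ≠ 0 := by intro hf0; rw [hf0] at hfg0; simp at hfg0
  have hc : c ≠ 0 := by intro hc0; rw [hc0] at hbc0; simp at hbc0
  have hg : g ≠ 0 := by intro hg0; rw [hg0] at hfg0; simp at hfg0
  have key2 : 4*(-(b*c))*((b*g - c*f)^2 + (f*(a-d) - b*(e-h)) * (c*(e-h) - g*(a-d)))
      = (2*(-(b*c))*(e-h) + (b*g + c*f)*(a-d))^2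
        + (b*g - c*f)^2 * (4*(-(b*c)) - (a-d)^2) := by ring
  have hPpos : 0 < -(b*c) := by linarith
  have h4P : 0 < 4*(-(b*c)) - (a-d)^2 := by nlinarith
  by_cases hp : b*g - c*f = 0
  · -- p = 0 : show q*r > 0
    rw [hp]
    have key3 : 4*(-(b*c))*((f*(a-d) - b*(e-h)) * (c*(e-h) - g*(a-d)))
        = (2*(-(b*c))*(e-h) + (b*g + c*f)*(a-d))^2 := by
      linear_combination key2 + (-(b*g-c*f)*(a-d)^2)*hp
    have hqr_nonneg : 0 ≤ (f*(a-d) - b*(e-h)) * (c*(e-h) - g*(a-d)) := by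
      nlinarith [key3, sq_nonneg (2*(-(b*c))*(e-h) + (b*g + c*f)*(a-d))]
    have hq : f*(a-d) - b*(e-h) ≠ 0 := by
      intro hq0
      have hr0 : c*(e-h) - g*(a-d) = 0 := by
        have hbf : b*f ≠ 0 := mul_ne_zero hb hf
        have : b*f*(c*(e-h) - g*(a-d)) = 0 := by
          linear_combination (-(c*f))*hq0 - (f*(a-d))*hp
        exact (mul_eq_zero.mp this).resolve_left hbf
      exact hne ⟨hp, hq0, hr0⟩
    have hr : c*(e-h) - g*(a-d) ≠ 0 := by
      intro hr0
      have hq0 : f*(a-d) - b*(e-h) = 0 := by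
        have hcg : c*g ≠ 0 := mul_ne_zero hc hg
        have : c*g*(f*(a-d) - b*(e-h)) = 0 := by
          linear_combination (-(c*f))*hr0 - (c*(e-h))*hp
        exact (mul_eq_zero.mp this).resolve_left hcg
      exact hne ⟨hp, hq0, hr0⟩
    have := mul_ne_zero hq hr
    have := lt_of_le_of_ne hqr_nonneg (Ne.symm this)
    nlinarith
  · -- p ≠ 0
    have hp2 : 0 < (b*g - c*f)^2 := by positivity
    nlinarith [key2, sq_nonneg (2*(-(b*c))*(e-h) + (b*g + c*f)*(a-d)),
      mul_pos hp2 h4P]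


/-- The commutator of two non-commuting elliptic elements of `SL(2,ℝ)` is
hyperbolic. -/
theorem commutator_of_elliptics_is_hyperbolic
    (A B : Matrix.SpecialLinearGroup (Fin 2) ℝ)
    (hA : |(A : Matrix (Fin 2) (Fin 2) ℝ).trace| < 2)
    (hB : |(B : Matrix (Fin 2) (Fin 2) ℝ).trace| < 2)
    (hAB : A * B ≠ B * A) :
    2 < |((A * B * A⁻¹ * B⁻¹ : Matrix.SpecialLinearGroup (Fin 2) ℝ) :
        Matrix (Fin 2) (Fin 2) ℝ).trace| := by
  set a := (A : Matrix (Fin 2) (Fin 2) ℝ) 0 0 with ha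
  set b := (A : Matrix (Fin 2) (Fin 2) ℝ) 0 1 with hb
  set c := (A : Matrix (Fin 2) (Fin 2) ℝ) 1 0 with hc
  set d := (A : Matrix (Fin 2) (Fin 2) ℝ) 1 1 with hd
  set e := (B : Matrix (Fin 2) (Fin 2) ℝ) 0 0 with he
  set f := (B : Matrix (Fin 2) (Fin 2) ℝ) 0 1 with hf
  set g := (B : Matrix (Fin 2) (Fin 2) ℝ) 1 0 with hg
  set h := (B : Matrix (Fin 2) (Fin 2) ℝ) 1 1 with hh
  have hdetA : a*d - b*c = 1 := by
    have := A.2; rwa [Matrix.det_fin_two] at this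
  have hdetB : e*h - f*g = 1 := by
    have := B.2; rwa [Matrix.det_fin_two] at this
  have hA2 : (a+d)^2 < 4 := by
    rw [Matrix.trace_fin_two] at hA
    nlinarith [abs_nonneg (a+d), sq_abs (a+d)]
  have hB2 : (e+h)^2 < 4 := by
    rw [Matrix.trace_fin_two] at hB
    nlinarith [abs_nonneg (e+h), sq_abs (e+h)]
  have hne : ¬(b*g - c*f = 0 ∧ f*(a-d) - b*(e-h) = 0 ∧ c*(e-h) - g*(a-d) = 0) := by
    rintro ⟨hp, hq, hr⟩
    apply hAB
    ext i j
    fin_cases i <;> fin_cases j <;>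
      simp only [Matrix.SpecialLinearGroup.coe_mul, Matrix.mul_apply,
        Fin.sum_univ_two, Fin.mk_zero, Fin.mk_one, Fin.isValue] <;>
      linarith
  have key : ((A * B * A⁻¹ * B⁻¹ : Matrix.SpecialLinearGroup (Fin 2) ℝ) :
      Matrix (Fin 2) (Fin 2) ℝ).trace
      = 2 + ((b*g - c*f)^2 + (f*(a-d) - b*(e-h)) * (c*(e-h) - g*(a-d))) := by
    simp [Matrix.SpecialLinearGroup.coe_mul, Matrix.SpecialLinearGroup.coe_inv,
      Matrix.adjugate_fin_two, Matrix.trace_fin_two, Matrix.mul_apply, Fin.sum_univ_two,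
      ← ha, ← hb, ← hc, ← hd, ← he, ← hf, ← hg, ← hh]
    linear_combination (2*(e*h - f*g)) * hdetA + 2 * hdetB
  have hpos := core_pos a b c d e f g h hdetA hdetB hA2 hB2 hne
  rw [key]
  calc (2:ℝ) < 2 + ((b*g - c*f)^2 + (f*(a-d) - b*(e-h)) * (c*(e-h) - g*(a-d))) := by linarith
    _ ≤ _ := le_abs_self _
end

section
/- Let α, β be nonzero real numbers with α ≠ β. Then T_α and T_β have no common eigenvector: there is no nonzero vector v ∈ ℝ² and real numbers λ, μ such that T_α·v = λ·v and T_β·v = μ·v. -/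
/-- The two-step transfer matrix of the random dimer model. -/
noncomputable def dimerT (X : ℝ) : Matrix (Fin 2) (Fin 2) ℝ :=
  !![X ^ 2 - 1, -X; X, -1]

/-- For nonzero `α ≠ β`, the transfer matrices `T_α` and `T_β` have no common
eigenvector. -/
theorem dimerT_no_common_eigenvector (α β : ℝ) (hα : α ≠ 0) (hβ : β ≠ 0)
    (hαβ : α ≠ β) :
    ¬ ∃ (v : Fin 2 → ℝ) (lam mu : ℝ), v ≠ 0 ∧
        (dimerT α).mulVec v = lam • v ∧ (dimerT β).mulVec v = mu • v := by
  rintro ⟨v, lam, mu, hv, h1, h2⟩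
  have e1 := congrFun h1 0
  have e2 := congrFun h1 1
  have e3 := congrFun h2 0
  have e4 := congrFun h2 1
  simp [dimerT, Matrix.mulVec, dotProduct, Fin.sum_univ_two] at e1 e2 e3 e4
  by_cases hy : v 1 = 0
  · have hx : v 0 = 0 := by
      have : α * v 0 = 0 := by rw [hy] at e2; linarith [e2]
      exact (mul_eq_zero.mp this).resolve_left hα
    apply hv
    funext i
    fin_cases i <;> simp [hx, hy]
  · have hA : α * (v 0 * v 1) = v 0 ^ 2 + v 1 ^ 2 := by
      have h : α * (α * (v 0 * v 1) - (v 0 ^ 2 + v 1 ^ 2)) = 0 := by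
        linear_combination (v 1) * e1 - (v 0) * e2
      have := (mul_eq_zero.mp h).resolve_left hα
      linarith
    have hB : β * (v 0 * v 1) = v 0 ^ 2 + v 1 ^ 2 := by
      have h : β * (β * (v 0 * v 1) - (v 0 ^ 2 + v 1 ^ 2)) = 0 := by
        linear_combination (v 1) * e3 - (v 0) * e4
      have := (mul_eq_zero.mp h).resolve_left hβ
      linarith
    have hxy : v 0 * v 1 = 0 := by
      have h : (α - β) * (v 0 * v 1) = 0 := by linear_combination hA - hB
      exact (mul_eq_zero.mp h).resolve_left (sub_ne_zero.mpr hαβ)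
    have hx : v 0 = 0 := (mul_eq_zero.mp hxy).resolve_right hy
    have : v 1 ^ 2 = 0 := by rw [hx] at hA; nlinarith [hA]
    exact hy (pow_eq_zero_iff (two_ne_zero)|>.mp this)
end

section
/- Let α, β be real numbers with α² > 4, and suppose that both equations (β² − 1)·(α + ε·√(α² − 4)) = 4β − (α − ε·√(α² − 4)) hold, for ε = 1 and for ε = −1. Then β² = 2 and α = 2β. -/
/-- If the elliptic matrix `T_β` exchanges the two eigendirections of the
hyperbolic matrix `T_α` — which is expressed by the two equations
`(β² - 1)(α + ε√(α² - 4)) = 4β - (α - ε√(α² - 4))` for `ε = ±1` — then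
`β² = 2` and `α = 2β`. -/
theorem dimer_critical_couple (α β : ℝ) (hα : 4 < α ^ 2)
    (h : ∀ ε : ℝ, ε = 1 ∨ ε = -1 →
      (β ^ 2 - 1) * (α + ε * Real.sqrt (α ^ 2 - 4)) =
        4 * β - (α - ε * Real.sqrt (α ^ 2 - 4))) :
    β ^ 2 = 2 ∧ α = 2 * β := by
  have h1 := h 1 (Or.inl rfl)
  have h2 := h (-1) (Or.inr rfl)
  set s := Real.sqrt (α ^ 2 - 4) with hs
  have hspos : 0 < s := Real.sqrt_pos.2 (by linarith)
  have hb : β ^ 2 = 2 := by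
    have : (β ^ 2 - 2) * (2 * s) = 0 := by nlinarith [h1, h2]
    have := mul_eq_zero.1 this
    rcases this with h' | h'
    · linarith
    · linarith
  refine ⟨hb, ?_⟩
  linear_combination (h1 + h2) / 4 - α / 2 * hb
end

section
/- Let λ > 1 be a real number and let β be a real number with β² = 2. Set D = !![λ, 0; 0, λ⁻¹] and R = !![0, 1 − β; 1 + β, 0]. Then for every finite list L of 2×2 real matrices, each entry of which equals D or R, there exist a sign s ∈ {1, −1}, an exponent u ∈ {0, 1}, and an integer k with |k| at most the number of entries of L equal to D, such that the product of the entries of L equals s·R^u·D^k. -/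
/-- Any finite word in the matrices `D = diag(l, l⁻¹)` (with `l > 1`) and
`R = !![0, 1 - β; 1 + β, 0]` (with `β² = 2`) can be put in the normal form
`± Rᵘ · Dᵏ` with `u ∈ {0,1}` and `|k|` at most the number of occurrences of
`D` in the word. -/
theorem dimer_critical_word_normal_form (l β : ℝ) (hl : 1 < l) (hβ : β ^ 2 = 2)
    (D R : Matrix (Fin 2) (Fin 2) ℝ)
    (hD : D = !![l, 0; 0, l⁻¹]) (hR : R = !![0, 1 - β; 1 + β, 0])
    (L : List (Matrix (Fin 2) (Fin 2) ℝ)) (hL : ∀ A ∈ L, A = D ∨ A = R) :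
    ∃ (s : ℝ) (u : ℕ) (k : ℤ), (s = 1 ∨ s = -1) ∧ (u = 0 ∨ u = 1) ∧
      |k| ≤ (L.count D : ℤ) ∧ L.prod = s • (R ^ u * D ^ k) := by
  have hl0 : l ≠ 0 := ne_of_gt (lt_trans zero_lt_one hl)
  have hDinv : D⁻¹ = !![l⁻¹, 0; 0, l] := by
    apply Matrix.inv_eq_right_inv
    subst hD
    ext i j
    fin_cases i <;> fin_cases j <;>
      simp [Matrix.mul_apply, Fin.sum_univ_two, mul_inv_cancel₀ hl0, inv_mul_cancel₀ hl0]
  have hdet : IsUnit D.det := by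
    rw [hD, Matrix.det_fin_two_of]
    simp [mul_inv_cancel₀ hl0]
  have hDR : D * R = R * D⁻¹ := by
    rw [hDinv, hD, hR]
    ext i j
    fin_cases i <;> fin_cases j <;>
      simp [Matrix.mul_apply, Fin.sum_univ_two] <;> ring
  have hRR : R * R = (-1 : ℝ) • (1 : Matrix (Fin 2) (Fin 2) ℝ) := by
    rw [hR]
    ext i j
    fin_cases i <;> fin_cases j <;>
      simp [Matrix.mul_apply, Fin.sum_univ_two, Matrix.one_apply] <;> nlinarith [hβ]
  have hRD : R ≠ D := by
    intro h
    have h00 := congrFun (congrFun h 0) 0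
    rw [hD, hR] at h00
    simp at h00
    linarith
  induction L with
  | nil => exact ⟨1, 0, 0, Or.inl rfl, Or.inl rfl, by simp, by simp⟩
  | cons A L ih =>
    obtain ⟨s, u, k, hs, hu, hk, hp⟩ := ih (fun B hB => hL B (List.mem_cons_of_mem _ hB))
    have hA := hL A List.mem_cons_self
    rcases hA with rfl | rfl
    · -- head is D
      rcases hu with rfl | rfl
      · refine ⟨s, 0, k + 1, hs, Or.inl rfl, ?_, ?_⟩
        · rw [List.count_cons_self]
          push_cast
          rw [abs_le] at hk ⊢
          omega
        · rw [List.prod_cons, hp, mul_smul_comm, pow_zero, one_mul, one_mul]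
          congr 1
          rw [show k + 1 = 1 + k by ring, Matrix.zpow_add hdet, zpow_one]
      · refine ⟨s, 1, k - 1, hs, Or.inr rfl, ?_, ?_⟩
        · rw [List.count_cons_self]
          push_cast
          rw [abs_le] at hk ⊢
          omega
        · rw [List.prod_cons, hp, mul_smul_comm, pow_one, ← mul_assoc, hDR,
            mul_assoc]
          congr 2
          rw [show k - 1 = -1 + k by ring, Matrix.zpow_add hdet, Matrix.zpow_neg_one]
    · -- head is R
      rcases hu with rfl | rfl
      · refine ⟨s, 1, k, hs, Or.inr rfl, ?_, ?_⟩
        · rwa [List.count_cons_of_ne hRD]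
        · rw [List.prod_cons, hp, mul_smul_comm, pow_zero, one_mul, pow_one]
      · refine ⟨-s, 0, k, ?_, Or.inl rfl, ?_, ?_⟩
        · rcases hs with rfl | rfl
          · right; norm_num
          · left; norm_num
        · rwa [List.count_cons_of_ne hRD]
        · rw [List.prod_cons, hp, mul_smul_comm, pow_one, pow_zero, one_mul, ← mul_assoc,
            hRR]
          rw [smul_mul_assoc, one_mul, smul_smul]
          congr 1
          ring
end
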